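/- arXiv:1903.06736 — 4 statements merged into one kernel-verified Lean document; each statement's English description precedes it below -/
import Mathlib

section
/- Let (K,v) be a valued field, let μ be a valuation on K[x] extending v, and let φ ∈ K[x] be a non-constant polynomial. Then φ is μ-minimal if and only if for every f ∈ K[x], writing the canonical φ-expansion f = Σ_{s≥0} a_s φ^s (with deg a_s < deg φ for all s), one has μ(f) = min_{s≥0} μ(a_s φ^s). -/
/-!
If `φ` is `μ`-minimal and `deg a < deg φ`, then `μ (a + g φ) = min (μ a) (μ (g φ))`: otherwise
the two values agree and `a ∼_μ -g φ`, so `φ` would `μ`-divide `a`. Peeling off the constant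
coefficient of a `φ`-expansion and inducting gives the formula. Conversely, if `g ∼_μ q φ` with
`deg g < deg φ`, expanding `q` exhibits `g` as the constant coefficient of an expansion of
`g - q φ`, so the formula gives `μ (g - q φ) ≤ μ g`, a contradiction.
-/

open Polynomial

section Core

variable {K : Type*} [Field K] {Λ : Type*} [AddCommGroup Λ] [LinearOrder Λ] [IsOrderedAddMonoid Λ]

/-- A (Krull) valuation on a field `K`, written additively, with values in `Λ ∪ {∞}`. -/
def IsVal (v : K → WithTop Λ) : Prop :=
  (∀ a b : K, v (a * b) = v a + v b) ∧
  (∀ a b : K, min (v a) (v b) ≤ v (a + b)) ∧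
  (∀ a : K, v a = ⊤ ↔ a = 0)

/-- A valuation on `K[x]` extending the valuation `v` on `K`. -/
def IsValExt (v : K → WithTop Λ) (μ : K[X] → WithTop Λ) : Prop :=
  (∀ f g : K[X], μ (f * g) = μ f + μ g) ∧
  (∀ f g : K[X], min (μ f) (μ g) ≤ μ (f + g)) ∧
  (∀ f : K[X], μ f = ⊤ ↔ f = 0) ∧
  (∀ c : K, μ (C c) = v c)

/-- A semivaluation on `K[x]` extending `v`: the value `∞` may be attained at
nonzero polynomials. -/
def IsSemivalExt (v : K → WithTop Λ) (μ : K[X] → WithTop Λ) : Prop :=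
  (∀ f g : K[X], μ (f * g) = μ f + μ g) ∧
  (∀ f g : K[X], min (μ f) (μ g) ≤ μ (f + g)) ∧
  μ 0 = ⊤ ∧
  (∀ c : K, μ (C c) = v c)

/-- `f ∼_μ h` : `μ (f - h) > μ f`. -/
def MuEquiv (μ : K[X] → WithTop Λ) (f h : K[X]) : Prop := μ f < μ (f - h)

/-- `h |_μ f` : `f ∼_μ q * h` for some `q`. -/
def MuDvd (μ : K[X] → WithTop Λ) (h f : K[X]) : Prop := ∃ q : K[X], MuEquiv μ f (q * h)

/-- `f` is `μ`-minimal : `f ∤_μ g` for all nonzero `g` of degree `< deg f`. -/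
def MuMinimal (μ : K[X] → WithTop Λ) (f : K[X]) : Prop :=
  ∀ g : K[X], g ≠ 0 → g.degree < f.degree → ¬ MuDvd μ f g

/-- `f` is `μ`-irreducible. -/
def MuIrred (μ : K[X] → WithTop Λ) (f : K[X]) : Prop :=
  f ≠ 0 ∧ ¬ MuDvd μ f 1 ∧ ∀ g h : K[X], MuDvd μ f (g * h) → MuDvd μ f g ∨ MuDvd μ f h

/-- A (MacLane–Vaquié) key polynomial for `μ`: monic, `μ`-minimal and `μ`-irreducible. -/
def IsKeyPol (μ : K[X] → WithTop Λ) (φ : K[X]) : Prop :=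
  φ.Monic ∧ MuMinimal μ φ ∧ MuIrred μ φ

end Core

namespace Polynomial

theorem sum_range_succ_mul_pow {R : Type*} [CommSemiring R] (a : ℕ → R) (φ : R) (N : ℕ) :
    ∑ s ∈ Finset.range (N + 1), a s * φ ^ s =
      a 0 + (∑ s ∈ Finset.range N, a (s + 1) * φ ^ s) * φ := by
  rw [Finset.sum_range_succ', Finset.sum_mul, pow_zero, mul_one, add_comm]
  simp only [pow_succ, mul_assoc]

variable {K : Type*} [Field K] {φ : K[X]}

theorem exists_sum_mul_pow_eq (hφ : 0 < φ.degree) (f : K[X]) :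
    ∃ (N : ℕ) (a : ℕ → K[X]), (∀ s, (a s).degree < φ.degree) ∧
      f = ∑ s ∈ Finset.range N, a s * φ ^ s := by
  have hφ0 : φ ≠ 0 := ne_zero_of_degree_gt hφ
  induction hn : f.natDegree using Nat.strong_induction_on generalizing f with
  | _ n ih =>
    by_cases hq : f / φ = 0
    · exact ⟨1, fun _ => f, fun _ => (Polynomial.div_eq_zero_iff hφ0).mp hq, by simp⟩
    have hf0 : f ≠ 0 := by rintro rfl; simp at hq
    have hlt : (f / φ).natDegree < n :=
      hn ▸ natDegree_lt_natDegree hq (degree_div_lt hf0 hφ)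
    obtain ⟨N, a, ha, hexp⟩ := ih _ hlt (f / φ) rfl
    refine ⟨N + 1, fun | 0 => f % φ | s + 1 => a s,
      fun | 0 => degree_mod_lt f hφ0 | s + 1 => ha s, ?_⟩
    rw [sum_range_succ_mul_pow, ← hexp, mul_comm, EuclideanDomain.mod_add_div]

end Polynomial

namespace AddValuation

variable {K : Type*} [Field K] {Λ : Type*} [AddCommGroup Λ] [LinearOrder Λ]
  [IsOrderedAddMonoid Λ] (ν : AddValuation K[X] (WithTop Λ)) {φ : K[X]}

theorem map_add_mul_of_muMinimal (hφ : MuMinimal ν φ) {a : K[X]} (ha : a.degree < φ.degree)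
    (g : K[X]) : ν (a + g * φ) = min (ν a) (ν (g * φ)) := by
  refine le_antisymm ?_ (ν.map_add _ _)
  by_contra! hlt
  by_cases hne : ν a = ν (g * φ)
  · rw [← hne, min_self] at hlt
    have ha0 : a ≠ 0 := by rintro rfl; simp at hlt
    exact hφ a ha0 ha ⟨-g, by rwa [MuEquiv, neg_mul, sub_neg_eq_add]⟩
  · exact hlt.ne' (ν.map_add_of_distinct_val hne)

theorem map_sum_mul_pow_of_muMinimal (hφ : MuMinimal ν φ) (N : ℕ) {a : ℕ → K[X]}
    (ha : ∀ s, (a s).degree < φ.degree) :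
    ν (∑ s ∈ Finset.range N, a s * φ ^ s) = (Finset.range N).inf fun s => ν (a s * φ ^ s) := by
  induction N generalizing a with
  | zero => simp
  | succ N ih =>
    have htail : ν ((∑ s ∈ Finset.range N, a (s + 1) * φ ^ s) * φ) =
        (Finset.range N).inf fun s => ν (a (s + 1) * φ ^ (s + 1)) := by
      rw [ν.map_mul, ih fun s => ha (s + 1), Finset.apply_inf_eq_inf_comp_of_linearOrder
        (· + ν φ) (fun _ _ h => add_le_add_left h _) (top_add _)]
      simp only [Function.comp_def, ← ν.map_mul, pow_succ, mul_assoc]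
    rw [Polynomial.sum_range_succ_mul_pow, map_add_mul_of_muMinimal ν hφ (ha 0), htail,
      Finset.range_add_one', Finset.inf_insert, Finset.inf_map, pow_zero, mul_one]
    rfl

theorem muMinimal_of_map_sum_mul_pow (hφ : 0 < φ.degree)
    (H : ∀ (N : ℕ) (a : ℕ → K[X]), (∀ s, (a s).degree < φ.degree) →
      ν (∑ s ∈ Finset.range N, a s * φ ^ s) = (Finset.range N).inf fun s => ν (a s * φ ^ s)) :
    MuMinimal ν φ := by
  rintro g - hg ⟨q, hq⟩
  obtain ⟨N, b, hb, rfl⟩ := Polynomial.exists_sum_mul_pow_eq hφ q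
  let c : ℕ → K[X] := fun | 0 => g | s + 1 => -b s
  have hc : ∀ s, (c s).degree < φ.degree := fun | 0 => hg | s + 1 => by simpa [c] using hb s
  have hexp : g - (∑ s ∈ Finset.range N, b s * φ ^ s) * φ =
      ∑ s ∈ Finset.range (N + 1), c s * φ ^ s := by
    simp [c, Polynomial.sum_range_succ_mul_pow, sub_eq_add_neg, Finset.sum_mul]
  have hle : ν (g - (∑ s ∈ Finset.range N, b s * φ ^ s) * φ) ≤ ν g := by
    rw [hexp, H _ _ hc]
    simpa [c] using
      Finset.inf_le (f := fun s => ν (c s * φ ^ s)) (Finset.mem_range.mpr N.succ_pos)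
  exact (hq.trans_le hle).false

theorem muMinimal_iff_map_sum_mul_pow (hφ : 0 < φ.degree) :
    MuMinimal ν φ ↔ ∀ (N : ℕ) (a : ℕ → K[X]), (∀ s, (a s).degree < φ.degree) →
      ν (∑ s ∈ Finset.range N, a s * φ ^ s) = (Finset.range N).inf fun s => ν (a s * φ ^ s) :=
  ⟨fun h N _ ha => map_sum_mul_pow_of_muMinimal ν h N ha, muMinimal_of_map_sum_mul_pow ν hφ⟩

end AddValuation

section

variable {K : Type*} [Field K] {Λ : Type*} [AddCommGroup Λ] [LinearOrder Λ] [IsOrderedAddMonoid Λ]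
  {v : K → WithTop Λ} {μ : K[X] → WithTop Λ}

theorem IsValExt.map_one (hμ : IsValExt v μ) : μ 1 = 0 := by
  obtain ⟨a, ha⟩ := WithTop.ne_top_iff_exists.mp (mt (hμ.2.2.1 1).mp one_ne_zero)
  have h := hμ.1 1 1
  rw [mul_one, ← ha, ← WithTop.coe_add, WithTop.coe_inj, left_eq_add] at h
  rw [← ha, h, WithTop.coe_zero]

noncomputable def IsValExt.toAddValuation (hμ : IsValExt v μ) : AddValuation K[X] (WithTop Λ) :=
  AddValuation.of μ ((hμ.2.2.1 0).mpr rfl) hμ.map_one hμ.2.1 hμ.1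

end

theorem statement_0_general {K : Type*} [Field K] {Λ : Type*} [AddCommGroup Λ] [LinearOrder Λ] [IsOrderedAddMonoid Λ]
    (v : K → WithTop Λ)
    (μ : K[X] → WithTop Λ) (hμ : IsValExt v μ)
    (φ : K[X]) (hφ : 0 < φ.degree) :
    MuMinimal μ φ ↔
      ∀ (f : K[X]) (N : ℕ) (a : ℕ → K[X]),
        (∀ s, (a s).degree < φ.degree) →
        f = ∑ s ∈ Finset.range N, a s * φ ^ s →
        μ f = (Finset.range N).inf fun s => μ (a s * φ ^ s) := by
  refine (hμ.toAddValuation.muMinimal_iff_map_sum_mul_pow hφ).trans ⟨?_, ?_⟩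
  · exact fun h f N a ha hf => hf ▸ h N a ha
  · exact fun h N a ha => h _ N a ha rfl

/-- `φ` is `μ`-minimal iff `μ` computes the minimum of values of the
monomials of the canonical `φ`-expansion, for every `f ∈ K[x]`. -/
theorem statement_0 {K : Type*} [Field K] {Λ : Type*} [AddCommGroup Λ] [LinearOrder Λ] [IsOrderedAddMonoid Λ]
    (v : K → WithTop Λ) (hv : IsVal v)
    (μ : K[X] → WithTop Λ) (hμ : IsValExt v μ)
    (φ : K[X]) (hφ : 0 < φ.degree) :
    MuMinimal μ φ ↔
      ∀ (f : K[X]) (N : ℕ) (a : ℕ → K[X]),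
        (∀ s, (a s).degree < φ.degree) →
        f = ∑ s ∈ Finset.range N, a s * φ ^ s →
        μ f = (Finset.range N).inf fun s => μ (a s * φ ^ s) :=
  statement_0_general v μ hμ φ hφ
end

section
/- Let (K,v) be a valued field, μ a valuation on K[x] extending v, and φ a key polynomial for μ. Let f ∈ K[x] be a monic polynomial with φ |_μ f and deg f = deg φ. Then φ ∼_μ f and f is a key polynomial for μ. -/
open Polynomial

section MuEquiv

variable {K : Type*} [Field K] {Λ : Type*} [AddCommGroup Λ] [LinearOrder Λ] [IsOrderedAddMonoid Λ]

theorem IsValExt.exists_addValuation {v : K → WithTop Λ} {μ : K[X] → WithTop Λ}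
    (hμ : IsValExt v μ) : ∃ w : AddValuation K[X] (WithTop Λ), ⇑w = μ := by
  obtain ⟨hmul, hadd, htop, -⟩ := hμ
  have hone : μ 1 = 0 := by
    obtain ⟨a, ha⟩ := WithTop.ne_top_iff_exists.mp (mt (htop 1).mp one_ne_zero)
    have hsq : μ 1 + μ 1 = μ 1 := by rw [← hmul, one_mul]
    rw [← ha, ← WithTop.coe_add, WithTop.coe_inj, add_eq_left] at hsq
    rw [← ha, hsq, WithTop.coe_zero]
  exact ⟨AddValuation.of μ ((htop 0).mpr rfl) hone hadd hmul, rfl⟩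

variable {w : AddValuation K[X] (WithTop Λ)}

theorem MuEquiv.map_eq {f h : K[X]} (hfh : MuEquiv w f h) : w h = w f :=
  w.map_eq_of_lt_sub (by rwa [AddValuation.map_sub_swap])

theorem MuEquiv.symm {f h : K[X]} (hfh : MuEquiv w f h) : MuEquiv w h f := by
  rw [MuEquiv, hfh.map_eq, AddValuation.map_sub_swap]
  exact hfh

theorem MuEquiv.muDvd_of_muDvd {φ ψ g : K[X]} (hφψ : MuEquiv w φ ψ) (hφg : MuDvd w φ g) :
    MuDvd w ψ g := by
  obtain ⟨q, hq⟩ := hφg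
  refine ⟨q, ?_⟩
  have hqφ : w (q * φ) = w g := hq.map_eq
  have hq_ne_top : w q ≠ ⊤ := by
    intro h
    rw [AddValuation.map_mul, h, top_add] at hqφ
    exact hq.ne_top hqφ.symm
  have hsmall : w g < w (q * (φ - ψ)) := by
    rw [← hqφ, AddValuation.map_mul, AddValuation.map_mul]
    exact WithTop.add_lt_add_left hq_ne_top hφψ
  rw [MuEquiv, show g - q * ψ = (g - q * φ) + q * (φ - ψ) by ring]
  exact w.map_lt_add hq hsmall

theorem IsKeyPol.of_muEquiv {φ f : K[X]} (hφ : IsKeyPol w φ) (hf : f.Monic)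
    (hφf : MuEquiv w φ f) (hdeg : f.degree = φ.degree) : IsKeyPol w f := by
  obtain ⟨-, hmin, -, hnot_one, hprime⟩ := hφ
  have to_φ {g : K[X]} : MuDvd w f g → MuDvd w φ g := hφf.symm.muDvd_of_muDvd
  have to_f {g : K[X]} : MuDvd w φ g → MuDvd w f g := hφf.muDvd_of_muDvd
  refine ⟨hf, fun g hg hgdeg hfg => hmin g hg (hdeg ▸ hgdeg) (to_φ hfg), hf.ne_zero,
    fun h => hnot_one (to_φ h), fun g h hfgh => ?_⟩
  exact (hprime g h (to_φ hfgh)).imp to_f to_f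

theorem MuEquiv.of_muDvd_of_degree_eq {φ f : K[X]} (hφ : φ.Monic) (hmin : MuMinimal w φ)
    (hf : f.Monic) (hdvd : MuDvd w φ f) (hdeg : f.degree = φ.degree) : MuEquiv w f φ := by
  obtain ⟨q, hq⟩ := hdvd
  by_contra hle
  rw [MuEquiv, not_lt] at hle
  refine hmin (f - φ) (fun h0 => hq.ne_top ?_) ?_ ⟨q - 1, ?_⟩
  · rw [h0, AddValuation.map_zero, top_le_iff] at hle
    exact hle
  · exact hdeg ▸ degree_sub_lt_left hdeg hf.ne_zero (by rw [hf.leadingCoeff, hφ.leadingCoeff])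
  · rw [MuEquiv, show f - φ - (q - 1) * φ = f - q * φ by ring]
    exact hle.trans_lt hq

end MuEquiv

theorem statement_1_general {K : Type*} [Field K] {Λ : Type*} [AddCommGroup Λ] [LinearOrder Λ] [IsOrderedAddMonoid Λ]
    (v : K → WithTop Λ)
    (μ : K[X] → WithTop Λ) (hμ : IsValExt v μ)
    (φ : K[X]) (hφ : IsKeyPol μ φ)
    (f : K[X]) (hmon : f.Monic) (hdvd : MuDvd μ φ f) (hdeg : f.degree = φ.degree) :
    MuEquiv μ φ f ∧ IsKeyPol μ f := by
  obtain ⟨w, rfl⟩ := hμ.exists_addValuation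
  have hφf : MuEquiv w φ f :=
    (MuEquiv.of_muDvd_of_degree_eq hφ.1 hφ.2.1 hmon hdvd hdeg).symm
  exact ⟨hφf, hφ.of_muEquiv hmon hφf hdeg⟩

/-- If `φ` is a key polynomial for `μ`, `f` is monic, `φ |_μ f` and
`deg f = deg φ`, then `φ ∼_μ f` and `f` is a key polynomial for `μ`. -/
theorem statement_1 {K : Type*} [Field K] {Λ : Type*} [AddCommGroup Λ] [LinearOrder Λ] [IsOrderedAddMonoid Λ]
    (v : K → WithTop Λ) (hv : IsVal v)
    (μ : K[X] → WithTop Λ) (hμ : IsValExt v μ)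
    (φ : K[X]) (hφ : IsKeyPol μ φ)
    (f : K[X]) (hmon : f.Monic) (hdvd : MuDvd μ φ f) (hdeg : f.degree = φ.degree) :
    MuEquiv μ φ f ∧ IsKeyPol μ f :=
  statement_1_general v μ hμ φ hφ f hmon hdvd hdeg
end

section
/- Let (K,v) be a valued field, μ a valuation on K[x] extending v, and φ a key polynomial for μ. Then for every monic non-constant f ∈ K[x] one has deg(φ)·μ(f) ≤ deg(f)·μ(φ) (natural-number scalar multiplication in the value group), and equality holds if and only if f is μ-minimal. -/
/-!
Write `d = deg φ` and `n = deg f`. Since `φ` is `μ`-minimal, `μ (r + Q φ^N) ≤ μ Q + N μ(φ)`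
whenever `deg r < N d`. For a monic `h` of degree `N d`, writing `h = (h - φ^N) + φ^N` gives
`μ h ≤ N μ(φ)`; with `h = f^d` this is the inequality, and exchanging the roles of `φ` and `f`
gives the reverse inequality when `f` is `μ`-minimal.

Conversely, if `d μ(f) = n μ(φ)`, then `z = f^d` is `μ`-minimal, hence so is `f`. Indeed, if
`P ∼ w z` with `deg P < deg z`, write `w (z - φ^n) = r + c φ^n` with `deg r < n d`; the bound
above, applied to `w z - P = (r - P) + (c + w) φ^n`, gives `w ∼ -c`, so `P ∼ (-c) z` with
`deg c < deg w`, and descent on `deg w` gives a contradiction.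
-/

open Polynomial

namespace IsValExt

variable {K : Type*} [Field K] {Λ : Type*} [AddCommGroup Λ] [LinearOrder Λ] [IsOrderedAddMonoid Λ]
  {v : K → WithTop Λ} {μ : K[X] → WithTop Λ}

theorem map_one_s2 (hμ : IsValExt v μ) : μ 1 = 0 := by
  obtain ⟨a, ha⟩ := WithTop.ne_top_iff_exists.1 ((hμ.2.2.1 1).not.2 one_ne_zero)
  have h := hμ.1 1 1
  rw [one_mul, ← ha, ← WithTop.coe_add, WithTop.coe_eq_coe, left_eq_add] at h
  rw [← ha, h, WithTop.coe_zero]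

noncomputable def toAddValuation_s2 (hμ : IsValExt v μ) : AddValuation K[X] (WithTop Λ) :=
  AddValuation.of μ ((hμ.2.2.1 0).2 rfl) hμ.map_one_s2 hμ.2.1 hμ.1

end IsValExt

namespace Polynomial

variable {R : Type*} [CommRing R] [IsDomain R]

theorem natDegree_mul_divByMonic_lt {q r w : R[X]} (hq : q.Monic)
    (hr : r.degree < q.degree) (h : (w * r) /ₘ q ≠ 0) :
    ((w * r) /ₘ q).natDegree < w.natDegree := by
  have hqw : q.degree ≤ (w * r).degree := not_lt.1 (mt (divByMonic_eq_zero_iff hq).2 h)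
  have hr0 : r ≠ 0 := by rintro rfl; simp at h
  have := natDegree_le_natDegree hqw
  have := natDegree_lt_natDegree hr0 hr
  have := natDegree_mul_le (p := w) (q := r)
  rw [natDegree_divByMonic _ hq]
  omega

theorem degree_divByMonic_lt_of_lt_mul {p q r : R[X]} (hq : q.Monic)
    (hp : p ≠ 0) (h : r.degree < (q * p).degree) : (r /ₘ q).degree < p.degree := by
  by_cases h0 : r /ₘ q = 0
  · rw [h0, degree_zero]
    exact bot_lt_iff_ne_bot.2 (degree_ne_bot.2 hp)
  have hr0 : r ≠ 0 := by rintro rfl; simp at h0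
  have := natDegree_lt_natDegree hr0 h
  rw [natDegree_mul hq.ne_zero hp] at this
  refine degree_lt_degree ?_
  rw [natDegree_divByMonic _ hq]
  have := natDegree_le_natDegree (not_lt.1 (mt (divByMonic_eq_zero_iff hq).2 h0))
  omega

theorem Monic.degree_sub_lt_of_natDegree_eq {p q : R[X]} (hp : p.Monic)
    (hq : q.Monic) (h : p.natDegree = q.natDegree) : (p - q).degree < q.degree := by
  have hdeg : p.degree = q.degree := by
    rw [degree_eq_natDegree hp.ne_zero, degree_eq_natDegree hq.ne_zero, h]
  rw [← hdeg]
  exact degree_sub_lt_left hdeg hp.ne_zero (by rw [hp.leadingCoeff, hq.leadingCoeff])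

end Polynomial

section

variable {K : Type*} [Field K] {Λ : Type*} [AddCommGroup Λ] [LinearOrder Λ] [IsOrderedAddMonoid Λ]
  {ν : AddValuation K[X] (WithTop Λ)} {φ : K[X]}

namespace MuEquiv

variable {a b c d : K[X]}

theorem map_eq_s2 (h : MuEquiv ν a b) : ν b = ν a :=
  ν.map_eq_of_lt_sub (by rwa [ν.map_sub_swap])

theorem ne_top (h : MuEquiv ν a b) : ν a ≠ ⊤ :=
  LT.lt.ne_top h

theorem symm_s2 (h : MuEquiv ν a b) : MuEquiv ν b a := by
  have hab := h.map_eq_s2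
  unfold MuEquiv at *
  rwa [ν.map_sub_swap, hab]

theorem trans (h₁ : MuEquiv ν a b) (h₂ : MuEquiv ν b c) : MuEquiv ν a c :=
  calc ν a < min (ν (a - b)) (ν (b - c)) := lt_min h₁ (h₁.map_eq_s2 ▸ h₂)
    _ ≤ ν (a - c) := by simpa only [sub_add_sub_cancel] using ν.map_add (a - b) (b - c)

theorem mul (h₁ : MuEquiv ν a b) (h₂ : MuEquiv ν c d) : MuEquiv ν (a * c) (b * d) := by
  have h : a * c - b * d = (a - b) * c + b * (c - d) := by ring
  unfold MuEquiv
  rw [h, ν.map_mul]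
  refine ν.map_lt_add ?_ ?_
  · rw [ν.map_mul]
    exact WithTop.add_lt_add_right h₂.ne_top h₁
  · rw [ν.map_mul, h₁.map_eq_s2]
    exact WithTop.add_lt_add_left h₁.ne_top h₂

theorem pow (h : MuEquiv ν a b) (n : ℕ) : MuEquiv ν (a ^ n) (b ^ n) := by
  induction n with
  | zero => simp [MuEquiv]
  | succ n ih => simpa only [pow_succ] using ih.mul h

end MuEquiv

theorem muEquiv_self {a : K[X]} (h : ν a ≠ ⊤) : MuEquiv ν a a := by
  simpa [MuEquiv] using h.lt_top

theorem MuIrred.ne_one (hφ : MuIrred ν φ) : φ ≠ 1 := by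
  rintro rfl
  exact hφ.2.1 ⟨1, by simp [MuEquiv]⟩

theorem MuMinimal.map_add_mul_le (hφ : MuMinimal ν φ) {r : K[X]} (hr : r.degree < φ.degree)
    (Q : K[X]) : ν (r + Q * φ) ≤ ν Q + ν φ := by
  rw [← ν.map_mul]
  by_contra! hlt
  have hrQ : ν r ≤ ν (Q * φ) := by
    have h := ν.map_sub (r + Q * φ) r
    rw [add_sub_cancel_left] at h
    exact (min_le_iff.1 h).resolve_left hlt.not_ge
  refine hφ r ?_ hr ⟨-Q, ?_⟩
  · rintro rfl
    rw [zero_add] at hlt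
    exact hlt.false
  · show ν r < ν (r - -Q * φ)
    rw [neg_mul, sub_neg_eq_add]
    exact hrQ.trans_lt hlt

theorem MuMinimal.map_add_mul_pow_le (hφm : φ.Monic) (hφ : MuMinimal ν φ) (N : ℕ) {r : K[X]}
    (hr : r.degree < (φ ^ N).degree) (Q : K[X]) : ν (r + Q * φ ^ N) ≤ ν Q + N • ν φ := by
  induction N generalizing r Q with
  | zero =>
    rw [pow_zero, degree_one] at hr
    obtain rfl : r = 0 := by simpa using hr
    simp
  | succ N ih =>
    have hdiv : (r /ₘ φ).degree < (φ ^ N).degree :=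
      degree_divByMonic_lt_of_lt_mul hφm (hφm.pow N).ne_zero (by rwa [← pow_succ'])
    calc ν (r + Q * φ ^ (N + 1)) = ν (r %ₘ φ + (r /ₘ φ + Q * φ ^ N) * φ) := by
          congr 1
          linear_combination -(modByMonic_add_div r φ)
      _ ≤ ν (r /ₘ φ + Q * φ ^ N) + ν φ := hφ.map_add_mul_le (degree_modByMonic_lt r hφm) _
      _ ≤ ν Q + N • ν φ + ν φ := add_le_add_left (ih hdiv Q) _
      _ = ν Q + (N + 1) • ν φ := by rw [succ_nsmul, add_assoc]

theorem MuMinimal.map_le_nsmul (hφm : φ.Monic) (hφ : MuMinimal ν φ) {h : K[X]} (hh : h.Monic)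
    {N : ℕ} (hN : h.natDegree = N * φ.natDegree) : ν h ≤ N • ν φ := by
  have hr := hh.degree_sub_lt_of_natDegree_eq (hφm.pow N) (by rw [hφm.natDegree_pow, hN])
  simpa using hφ.map_add_mul_pow_le hφm N hr 1

theorem MuMinimal.exists_muEquiv_mul_natDegree_lt (hφm : φ.Monic) (hφ : MuMinimal ν φ)
    {z : K[X]} (hz : z.Monic) {N : ℕ} (hN : z.natDegree = N * φ.natDegree)
    (hzν : ν z = N • ν φ) {P w : K[X]} (hP : P.degree < z.degree) (hPw : MuEquiv ν P (w * z)) :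
    ∃ w' : K[X], w'.natDegree < w.natDegree ∧ MuEquiv ν P (w' * z) := by
  have hρ := hz.degree_sub_lt_of_natDegree_eq (hφm.pow N) (by rw [hφm.natDegree_pow, hN])
  set c := (w * (z - φ ^ N)) /ₘ φ ^ N
  have hz_eq : z.degree = (φ ^ N).degree := by
    rw [degree_eq_natDegree hz.ne_zero, degree_eq_natDegree (hφm.pow N).ne_zero,
      hφm.natDegree_pow, hN]
  have hsplit : w * z - P = ((w * (z - φ ^ N)) %ₘ φ ^ N - P) + (c + w) * φ ^ N := by
    linear_combination -(modByMonic_add_div (w * (z - φ ^ N)) (φ ^ N))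
  have hlt : ν w + N • ν φ < ν (c + w) + N • ν φ :=
    calc ν w + N • ν φ = ν (w * z) := by rw [ν.map_mul, hzν]
      _ < ν (w * z - P) := hPw.symm_s2
      _ ≤ ν (c + w) + N • ν φ := hsplit ▸ hφ.map_add_mul_pow_le hφm N
          ((degree_sub_le _ _).trans_lt
            (max_lt (degree_modByMonic_lt _ (hφm.pow N)) (hz_eq ▸ hP))) _
  have hwc : MuEquiv ν w (-c) := by
    show ν w < ν (w - -c)
    rw [sub_neg_eq_add, add_comm]
    exact lt_of_add_lt_add_right hlt
  have hc : c ≠ 0 := by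
    intro hc
    rw [hc, neg_zero] at hwc
    exact hwc.ne (by rw [sub_zero])
  have hzt : ν z ≠ ⊤ := by
    have := hPw.symm_s2.ne_top
    rw [ν.map_mul] at this
    exact (WithTop.add_ne_top.1 this).2
  refine ⟨-c, ?_, hPw.trans (hwc.mul (muEquiv_self hzt))⟩
  rw [natDegree_neg]
  exact natDegree_mul_divByMonic_lt (hφm.pow N) hρ hc

theorem muMinimal_of_map_eq_nsmul (hφm : φ.Monic) (hφ : MuMinimal ν φ) {z : K[X]}
    (hz : z.Monic) {N : ℕ} (hN : z.natDegree = N * φ.natDegree) (hzν : ν z = N • ν φ) :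
    MuMinimal ν z := by
  rintro P - hP ⟨w, hPw⟩
  induction hn : w.natDegree using Nat.strong_induction_on generalizing w with
  | _ n ih =>
    obtain ⟨w', hlt, hPw'⟩ := hφ.exists_muEquiv_mul_natDegree_lt hφm hz hN hzν hP hPw
    exact ih _ (hn ▸ hlt) w' hPw' rfl

theorem MuMinimal.of_pow {f : K[X]} {n : ℕ} (hn : n ≠ 0) (hf : MuMinimal ν (f ^ n)) :
    MuMinimal ν f := by
  rintro g hg0 hg ⟨q, hgq⟩
  refine hf (g ^ n) (pow_ne_zero n hg0) (degree_lt_degree ?_) ⟨q ^ n, ?_⟩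
  · rw [natDegree_pow, natDegree_pow]
    exact Nat.mul_lt_mul_of_pos_left (natDegree_lt_natDegree hg0 hg) (Nat.pos_of_ne_zero hn)
  · simpa only [mul_pow] using hgq.pow n

end

theorem statement_2_general {K : Type*} [Field K] {Λ : Type*} [AddCommGroup Λ] [LinearOrder Λ] [IsOrderedAddMonoid Λ]
    (v : K → WithTop Λ)
    (μ : K[X] → WithTop Λ) (hμ : IsValExt v μ)
    (φ : K[X]) (hφ : IsKeyPol μ φ)
    (f : K[X]) (hmon : f.Monic) :
    φ.natDegree • μ f ≤ f.natDegree • μ φ ∧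
      (φ.natDegree • μ f = f.natDegree • μ φ ↔ MuMinimal μ f) := by
  obtain ⟨ν, rfl⟩ : ∃ ν : AddValuation K[X] (WithTop Λ), ⇑ν = μ := ⟨hμ.toAddValuation_s2, rfl⟩
  obtain ⟨hφm, hφmin, hφirr⟩ := hφ
  have hle : φ.natDegree • ν f ≤ f.natDegree • ν φ := by
    simpa only [ν.map_pow] using
      hφmin.map_le_nsmul hφm (hmon.pow _) (by rw [hmon.natDegree_pow, mul_comm])
  refine ⟨hle, fun heq => ?_, fun hf => hle.antisymm ?_⟩
  · have hd : φ.natDegree ≠ 0 := fun h => hφirr.ne_one (hφm.natDegree_eq_zero.1 h)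
    exact (muMinimal_of_map_eq_nsmul hφm hφmin (hmon.pow _)
      (by rw [hmon.natDegree_pow, mul_comm]) (by rw [ν.map_pow, heq])).of_pow hd
  · simpa only [ν.map_pow] using
      hf.map_le_nsmul hmon (hφm.pow _) (by rw [hφm.natDegree_pow, mul_comm])

/-- Weight bound: `deg φ • μ f ≤ deg f • μ φ` for monic non-constant `f`,
with equality iff `f` is `μ`-minimal. -/
theorem statement_2 {K : Type*} [Field K] {Λ : Type*} [AddCommGroup Λ] [LinearOrder Λ] [IsOrderedAddMonoid Λ]
    (v : K → WithTop Λ) (hv : IsVal v)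
    (μ : K[X] → WithTop Λ) (hμ : IsValExt v μ)
    (φ : K[X]) (hφ : IsKeyPol μ φ)
    (f : K[X]) (hmon : f.Monic) (hdeg : 0 < f.degree) :
    φ.natDegree • μ f ≤ f.natDegree • μ φ ∧
      (φ.natDegree • μ f = f.natDegree • μ φ ↔ MuMinimal μ f) :=
  statement_2_general v μ hμ φ hφ f hmon
end

section
/- Let (K,v) be a valued field, μ a valuation on K[x] extending v, and φ a key polynomial for μ. Then the map on the field K_φ = K[x]/(φ) defined by sending the class of f ∈ K[x] \ (φ) to μ(a_0), where a_0 is the remainder of the division of f by φ (and sending 0 to ∞), is well defined and is a valuation on K_φ whose restriction to K (via the canonical embedding K → K_φ) equals v. In particular, for all f,g ∈ K[x] not divisible by φ, μ((f·g) mod φ) = μ(f mod φ) + μ(g mod φ). -/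
/-!
Write `a = f mod φ`. Since `deg a < deg φ`, `μ`-minimality says that `φ` does not `μ`-divide a
nonzero remainder, and `μ`-irreducibility extends this to a product `a * b` of two nonzero
remainders. For any `h` not `μ`-divisible by `φ`, writing `h = h mod φ + q φ` shows
`μ (h mod φ) = μ h`: a strict inequality in either direction would make `φ` `μ`-divide
`h mod φ` or `h`. Applied to `h = (f mod φ) * (g mod φ)`, whose remainder is `f g mod φ`, this
gives multiplicativity. The other axioms pass to remainders because `· mod φ` is additive, and
constants are their own remainders since `φ ∤_μ 1` forces `φ ≠ 1`.
-/

open Polynomial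

section KeyPolynomial

variable {K : Type*} [Field K] {Λ : Type*} [LinearOrder Λ]
  {μ : K[X] → WithTop Λ} {φ : K[X]}

lemma muDvd_one_one (h0 : μ 0 = ⊤) (h1 : μ 1 ≠ ⊤) : MuDvd μ 1 1 :=
  ⟨1, by rw [MuEquiv, mul_one, sub_self, h0]; exact h1.lt_top⟩

lemma IsKeyPol.degree_pos (hφ : IsKeyPol μ φ) (h0 : μ 0 = ⊤) (h1 : μ 1 ≠ ⊤) :
    0 < φ.degree := by
  rw [hφ.1.degree_pos]
  rintro rfl
  exact hφ.2.2.2.1 (muDvd_one_one h0 h1)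

lemma MuMinimal.not_muDvd_modByMonic (hmin : MuMinimal μ φ) (hm : φ.Monic) {f : K[X]}
    (hf : f %ₘ φ ≠ 0) : ¬ MuDvd μ φ (f %ₘ φ) :=
  hmin _ hf (degree_modByMonic_lt f hm)

lemma MuMinimal.mu_modByMonic_eq (hmin : MuMinimal μ φ) (hm : φ.Monic) (h0 : μ 0 = ⊤)
    {f : K[X]} (hf : ¬ MuDvd μ φ f) : μ (f %ₘ φ) = μ f := by
  have hdiv : f %ₘ φ + φ * (f /ₘ φ) = f := modByMonic_add_div f φ
  rcases lt_trichotomy (μ (f %ₘ φ)) (μ f) with hlt | heq | hgt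
  · have hr : f %ₘ φ ≠ 0 := by
      intro hr
      rw [hr, h0] at hlt
      exact not_top_lt hlt
    refine absurd ⟨-(f /ₘ φ), ?_⟩ (hmin.not_muDvd_modByMonic hm hr)
    rwa [MuEquiv, show f %ₘ φ - -(f /ₘ φ) * φ = f by linear_combination hdiv]
  · exact heq
  · refine absurd ⟨f /ₘ φ, ?_⟩ hf
    rwa [MuEquiv, show f - f /ₘ φ * φ = f %ₘ φ by linear_combination -hdiv]

lemma IsKeyPol.mu_modByMonic_mul [Add Λ] (hφ : IsKeyPol μ φ)
    (hμmul : ∀ f g, μ (f * g) = μ f + μ g) (h0 : μ 0 = ⊤) (f g : K[X]) : μ ((f * g) %ₘ φ) = μ (f %ₘ φ) + μ (g %ₘ φ) := by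
  obtain ⟨hm, hmin, -, -, hirr⟩ := hφ
  rw [mul_modByMonic]
  by_cases hf : f %ₘ φ = 0
  · rw [hf, zero_mul, zero_modByMonic, h0, WithTop.top_add]
  by_cases hg : g %ₘ φ = 0
  · rw [hg, mul_zero, zero_modByMonic, h0, WithTop.add_top]
  have hfg : ¬ MuDvd μ φ (f %ₘ φ * (g %ₘ φ)) := fun h =>
    (hirr _ _ h).elim (hmin.not_muDvd_modByMonic hm hf) (hmin.not_muDvd_modByMonic hm hg)
  rw [hmin.mu_modByMonic_eq hm h0 hfg, hμmul]

end KeyPolynomial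

theorem statement_3_general {K : Type*} [Field K] {Λ : Type*} [AddCommGroup Λ] [LinearOrder Λ] [IsOrderedAddMonoid Λ]
    (v : K → WithTop Λ)
    (μ : K[X] → WithTop Λ) (hμ : IsValExt v μ)
    (φ : K[X]) (hφ : IsKeyPol μ φ) :
    (∀ f g : K[X], φ ∣ (f - g) → μ (f %ₘ φ) = μ (g %ₘ φ)) ∧
    (∀ f g : K[X], μ ((f * g) %ₘ φ) = μ (f %ₘ φ) + μ (g %ₘ φ)) ∧
    (∀ f g : K[X], min (μ (f %ₘ φ)) (μ (g %ₘ φ)) ≤ μ ((f + g) %ₘ φ)) ∧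
    (∀ f : K[X], μ (f %ₘ φ) = ⊤ ↔ φ ∣ f) ∧
    (∀ c : K, μ (C c %ₘ φ) = v c) := by
  obtain ⟨hμmul, hμadd, hμtop, hμC⟩ := hμ
  have h0 : μ 0 = ⊤ := (hμtop 0).mpr rfl
  have h1 : μ 1 ≠ ⊤ := (hμtop 1).not.mpr one_ne_zero
  have hm : φ.Monic := hφ.1
  refine ⟨fun f g hfg => by rw [modByMonic_eq_of_dvd_sub hm hfg],
    hφ.mu_modByMonic_mul hμmul h0,
    fun f g => by rw [add_modByMonic]; exact hμadd _ _,
    fun f => by rw [hμtop, modByMonic_eq_zero_iff_dvd hm], fun c => ?_⟩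
  rw [(modByMonic_eq_self_iff hm).mpr (degree_C_le.trans_lt (hφ.degree_pos h0 h1)), hμC]

/-- The map sending the class of `f` in `K_φ = K[x]/(φ)` to `μ (f %ₘ φ)`
is well defined and is a valuation on `K_φ` extending `v`; in particular it is
multiplicative: `μ((f·g) mod φ) = μ(f mod φ) + μ(g mod φ)`. -/
theorem statement_3 {K : Type*} [Field K] {Λ : Type*} [AddCommGroup Λ] [LinearOrder Λ] [IsOrderedAddMonoid Λ]
    (v : K → WithTop Λ) (hv : IsVal v)
    (μ : K[X] → WithTop Λ) (hμ : IsValExt v μ)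
    (φ : K[X]) (hφ : IsKeyPol μ φ) :
    (∀ f g : K[X], φ ∣ (f - g) → μ (f %ₘ φ) = μ (g %ₘ φ)) ∧
    (∀ f g : K[X], μ ((f * g) %ₘ φ) = μ (f %ₘ φ) + μ (g %ₘ φ)) ∧
    (∀ f g : K[X], min (μ (f %ₘ φ)) (μ (g %ₘ φ)) ≤ μ ((f + g) %ₘ φ)) ∧
    (∀ f : K[X], μ (f %ₘ φ) = ⊤ ↔ φ ∣ f) ∧
    (∀ c : K, μ (C c %ₘ φ) = v c) :=
  statement_3_general v μ hμ φ hφ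
end
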